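/- arXiv:math/0512556 — 4 statements merged into one kernel-verified Lean document; each statement's English description precedes it below -/
import Mathlib

section
/- Let k be a field, E a finite-dimensional k-vector space, and σ a nondegenerate alternating bilinear form on E. Let V, W ⊆ E be Lagrangian subspaces, i.e. V = V^⊥ and W = W^⊥, where for a subspace U, U^⊥ = {x ∈ E : σ(x,u) = 0 for all u ∈ U}. Then the sequence 0 → V ∩ W → E → V* ⊕ W* → (V ∩ W)* → 0 is exact, where: the first map is the inclusion of V ∩ W into E; the second map sends x ∈ E to the pair of functionals (σ(x,·)|_V, σ(x,·)|_W); and the third map sends a pair (φ, ψ) ∈ V* ⊕ W* to the functional (φ − ψ)|_{V∩W} on V ∩ W obtained by restricting φ and ψ to V ∩ W and taking the difference. -/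
/-!
Since `σ` is nondegenerate and `E` is finite-dimensional, `x ↦ σ(x,·)` identifies `E` with `E*`,
so each restriction `x ↦ σ(x,·)|_U` is onto `U*`; for a Lagrangian `U` its kernel is `U`, whence
`dim E = 2 dim U`. The kernel of the middle map is therefore `V ∩ W`, and the last map is onto
because a functional on `V ∩ W` extends to `V`. Both composites vanish, and exactness at
`V* ⊕ W*` follows by counting dimensions: `dim E - dim (V ∩ W) = dim V + dim W - dim (V ∩ W)`.
-/

open Module LinearMap

def IsLagrangian {R E : Type*} [CommRing R] [AddCommGroup E] [Module R E]
    (σ : E →ₗ[R] E →ₗ[R] R) (U : Submodule R E) : Prop :=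
  ∀ x : E, x ∈ U ↔ ∀ u ∈ U, σ x u = 0

theorem Submodule.mem_ker_dualMap_subtype_comp {R E F : Type*} [CommRing R]
    [AddCommGroup E] [Module R E] [AddCommGroup F] [Module R F]
    (σ : F →ₗ[R] Dual R E) (U : Submodule R E) (x : F) :
    x ∈ ker (U.subtype.dualMap ∘ₗ σ) ↔ ∀ u ∈ U, σ x u = 0 := by
  rw [mem_ker]
  exact ⟨fun hx u hu => LinearMap.congr_fun hx ⟨u, hu⟩, fun hx => LinearMap.ext fun u => hx u u.2⟩

theorem IsLagrangian.ker_dualMap_subtype_comp {R E : Type*} [CommRing R] [AddCommGroup E]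
    [Module R E] {σ : E →ₗ[R] E →ₗ[R] R} {U : Submodule R E} (hU : IsLagrangian σ U) :
    ker (U.subtype.dualMap ∘ₗ σ) = U := by
  ext x
  rw [U.mem_ker_dualMap_subtype_comp, hU x]

theorem LinearMap.surjective_dualMap_comp_fst_sub_dualMap_comp_snd {k A B C : Type*} [Field k]
    [AddCommGroup A] [Module k A] [AddCommGroup B] [Module k B] [AddCommGroup C] [Module k C]
    {f : A →ₗ[k] B} (hf : Function.Injective f) (g : A →ₗ[k] C) :
    Function.Surjective
      (f.dualMap ∘ₗ fst k (Dual k B) (Dual k C) - g.dualMap ∘ₗ snd k (Dual k B) (Dual k C)) := by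
  intro χ
  obtain ⟨φ, rfl⟩ := dualMap_surjective_of_injective hf χ
  exact ⟨(φ, 0), by simp⟩

theorem LinearMap.range_eq_ker_of_finrank_add_eq {k M N P : Type*} [Field k]
    [AddCommGroup M] [Module k M] [AddCommGroup N] [Module k N] [AddCommGroup P] [Module k P]
    [FiniteDimensional k M] [FiniteDimensional k N]
    {f : M →ₗ[k] N} {g : N →ₗ[k] P} (hgf : g ∘ₗ f = 0) (hg : Function.Surjective g)
    (hdim : finrank k M + finrank k P = finrank k N + finrank k (ker f)) :
    range f = ker g := by
  refine Submodule.eq_of_le_of_finrank_eq (range_le_ker_iff.mpr hgf) ?_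
  have hf := finrank_range_add_finrank_ker f
  have hg' := finrank_range_add_finrank_ker g
  rw [range_eq_top.mpr hg, finrank_top] at hg'
  omega

section Nondegenerate

variable {k E : Type*} [Field k] [AddCommGroup E] [Module k E] [FiniteDimensional k E]
  {σ : E →ₗ[k] E →ₗ[k] k}

theorem surjective_dualMap_subtype_comp_of_injective (hσ : Function.Injective σ)
    (U : Submodule k E) : Function.Surjective (U.subtype.dualMap ∘ₗ σ) :=
  (dualMap_surjective_of_injective U.injective_subtype).comp
    ((injective_iff_surjective_of_finrank_eq_finrank Subspace.dual_finrank_eq.symm).mp hσ)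

theorem IsLagrangian.finrank_eq_two_mul (hσ : Function.Injective σ) {U : Submodule k E}
    (hU : IsLagrangian σ U) : finrank k E = 2 * finrank k U := by
  have h := finrank_range_add_finrank_ker (U.subtype.dualMap ∘ₗ σ)
  rw [hU.ker_dualMap_subtype_comp,
    range_eq_top.mpr (surjective_dualMap_subtype_comp_of_injective hσ U), finrank_top,
    Subspace.dual_finrank_eq] at h
  omega

end Nondegenerate

theorem stmt_3_general (k : Type*) [Field k] (E : Type*) [AddCommGroup E] [Module k E]
    [FiniteDimensional k E]
    (σ : E →ₗ[k] E →ₗ[k] k)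
    (hnondeg : ∀ x : E, (∀ y : E, σ x y = 0) → x = 0)
    (V W : Submodule k E)
    (hV : ∀ x : E, x ∈ V ↔ ∀ v ∈ V, σ x v = 0)
    (hW : ∀ x : E, x ∈ W ↔ ∀ w ∈ W, σ x w = 0) :
    Function.Injective ((V ⊓ W).subtype) ∧
    LinearMap.range ((V ⊓ W).subtype)
      = LinearMap.ker
        (LinearMap.prod (V.subtype.dualMap ∘ₗ σ) (W.subtype.dualMap ∘ₗ σ)) ∧
    LinearMap.range
        (LinearMap.prod (V.subtype.dualMap ∘ₗ σ) (W.subtype.dualMap ∘ₗ σ))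
      = LinearMap.ker
        ((Submodule.inclusion (inf_le_left : V ⊓ W ≤ V)).dualMap ∘ₗ
            LinearMap.fst k (Module.Dual k V) (Module.Dual k W)
          - (Submodule.inclusion (inf_le_right : V ⊓ W ≤ W)).dualMap ∘ₗ
            LinearMap.snd k (Module.Dual k V) (Module.Dual k W)) ∧
    Function.Surjective
        ((Submodule.inclusion (inf_le_left : V ⊓ W ≤ V)).dualMap ∘ₗ
            LinearMap.fst k (Module.Dual k V) (Module.Dual k W)
          - (Submodule.inclusion (inf_le_right : V ⊓ W ≤ W)).dualMap ∘ₗ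
            LinearMap.snd k (Module.Dual k V) (Module.Dual k W)) := by
  have hσ : Function.Injective σ := injective_iff_map_eq_zero σ |>.mpr
    fun x hx => hnondeg x fun y => LinearMap.congr_fun hx y
  have hker : ker ((V.subtype.dualMap ∘ₗ σ).prod (W.subtype.dualMap ∘ₗ σ)) = V ⊓ W := by
    rw [ker_prod, IsLagrangian.ker_dualMap_subtype_comp hV,
      IsLagrangian.ker_dualMap_subtype_comp hW]
  have hsurj := surjective_dualMap_comp_fst_sub_dualMap_comp_snd
    (Submodule.inclusion_injective (inf_le_left : V ⊓ W ≤ V))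
    (Submodule.inclusion (inf_le_right : V ⊓ W ≤ W))
  refine ⟨(V ⊓ W).injective_subtype, by rw [Submodule.range_subtype, hker], ?_, hsurj⟩
  refine range_eq_ker_of_finrank_add_eq ?_ hsurj ?_
  · ext x u
    simp
  · have hdimV := IsLagrangian.finrank_eq_two_mul hσ hV
    have hdimW := IsLagrangian.finrank_eq_two_mul hσ hW
    rw [hker, finrank_prod, Subspace.dual_finrank_eq, Subspace.dual_finrank_eq,
      Subspace.dual_finrank_eq]
    omega

/-- Let `(E, σ)` be a finite-dimensional symplectic vector space over a field `k`
(`σ` a nondegenerate alternating bilinear form) and let `V`, `W` be Lagrangian subspaces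
(`V = V^⊥`, `W = W^⊥`). Then the sequence
`0 → V ∩ W → E → V* ⊕ W* → (V ∩ W)* → 0`
is exact, where the second map is `x ↦ (σ(x,·)|_V, σ(x,·)|_W)` and the third map is
`(φ, ψ) ↦ (φ − ψ)|_{V∩W}`. -/
theorem stmt_3 (k : Type*) [Field k] (E : Type*) [AddCommGroup E] [Module k E]
    [FiniteDimensional k E]
    (σ : E →ₗ[k] E →ₗ[k] k)
    (halt : ∀ x : E, σ x x = 0)
    (hnondeg : ∀ x : E, (∀ y : E, σ x y = 0) → x = 0)
    (V W : Submodule k E)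
    (hV : ∀ x : E, x ∈ V ↔ ∀ v ∈ V, σ x v = 0)
    (hW : ∀ x : E, x ∈ W ↔ ∀ w ∈ W, σ x w = 0) :
    Function.Injective ((V ⊓ W).subtype) ∧
    LinearMap.range ((V ⊓ W).subtype)
      = LinearMap.ker
        (LinearMap.prod (V.subtype.dualMap ∘ₗ σ) (W.subtype.dualMap ∘ₗ σ)) ∧
    LinearMap.range
        (LinearMap.prod (V.subtype.dualMap ∘ₗ σ) (W.subtype.dualMap ∘ₗ σ))
      = LinearMap.ker
        ((Submodule.inclusion (inf_le_left : V ⊓ W ≤ V)).dualMap ∘ₗ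
            LinearMap.fst k (Module.Dual k V) (Module.Dual k W)
          - (Submodule.inclusion (inf_le_right : V ⊓ W ≤ W)).dualMap ∘ₗ
            LinearMap.snd k (Module.Dual k V) (Module.Dual k W)) ∧
    Function.Surjective
        ((Submodule.inclusion (inf_le_left : V ⊓ W ≤ V)).dualMap ∘ₗ
            LinearMap.fst k (Module.Dual k V) (Module.Dual k W)
          - (Submodule.inclusion (inf_le_right : V ⊓ W ≤ W)).dualMap ∘ₗ
            LinearMap.snd k (Module.Dual k V) (Module.Dual k W)) :=
  stmt_3_general k E σ hnondeg V W hV hW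
end

section
/- Let I ⊆ ℂ[X,Y,Z] be an ideal whose radical equals the maximal ideal (X,Y,Z) (so the subscheme it defines is supported at the origin). Suppose I is invariant under the torus T₀: for every (t₁,t₂,t₃) ∈ (ℂ*)³ with t₁t₂t₃ = 1, the ℂ-algebra automorphism of ℂ[X,Y,Z] determined by X ↦ t₁X, Y ↦ t₂Y, Z ↦ t₃Z maps I into I. Then I is a monomial ideal: for every f ∈ I, every monomial appearing in f with nonzero coefficient lies in I; equivalently, I is generated by the monomials it contains. -/
/-!
Restricted to a one-parameter subgroup `x ↦ (x ^ e 0, x ^ e 1, x ^ e 2)` of `T₀`, invariance says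
that `∑ₙ xⁿ fₙ ∈ I` for every `x ≠ 0`, where `fₙ` are the components of `f` of `e`-weight `n`.
A Laurent polynomial vanishing on `ℂˣ` is zero, so applying linear forms vanishing on `I` shows
`fₙ ∈ I`. The weights `(1, 0, -1)` and `(0, 1, -1)` together identify two monomials exactly when
they differ by a power of `XYZ`, so the resulting component of `f` is `X^b · q(XYZ)` for a
one-variable polynomial `q`. Write `q = Tᵛ u` with `u(0) ≠ 0`. As `XYZ` lies in the radical,
`(XYZ)ᴺ ∈ I`, and `u` is coprime to `Tᴺ`, so `X^b (XYZ)ᵛ ∈ I`; every monomial of the component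
is a multiple of this one.
-/

open MvPolynomial Finset

section Separation

variable {K ι : Type*} [Field K] [Infinite K]

theorem sum_filter_eq_zero_of_forall_sum_zpow_mul_eq_zero (s : Finset ι) (w : ι → ℤ)
    (c : ι → K) (h : ∀ x : K, x ≠ 0 → ∑ i ∈ s, x ^ w i * c i = 0) (n : ℤ) :
    ∑ i ∈ s with w i = n, c i = 0 := by
  -- multiplying by `x ^ m` turns the Laurent polynomial into the polynomial `P` below
  obtain ⟨m, hm, hnm⟩ : ∃ m : ℤ, (∀ i ∈ s, 0 ≤ w i + m) ∧ 0 ≤ n + m := by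
    have hle : ∀ i ∈ s, |w i| ≤ ∑ j ∈ s, |w j| :=
      fun i hi => single_le_sum (fun j _ => abs_nonneg (w j)) hi
    refine ⟨∑ i ∈ s, |w i| + |n|, fun i hi => ?_, ?_⟩
    · linarith [neg_abs_le (w i), abs_nonneg n, hle i hi]
    · linarith [neg_abs_le n, sum_nonneg fun j (_ : j ∈ s) => abs_nonneg (w j)]
  set P : Polynomial K := ∑ i ∈ s, Polynomial.C (c i) * Polynomial.X ^ (w i + m).toNat
  have hP : P = 0 := by
    refine P.eq_zero_of_infinite_isRoot ((Set.finite_singleton 0).infinite_compl.mono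
      fun x hx => ?_)
    have hx : x ≠ 0 := hx
    simp only [Set.mem_ofPred_eq, Polynomial.IsRoot, P, Polynomial.eval_finsetSum,
      Polynomial.eval_mul, Polynomial.eval_C, Polynomial.eval_pow, Polynomial.eval_X]
    calc ∑ i ∈ s, c i * x ^ (w i + m).toNat = x ^ m * ∑ i ∈ s, x ^ w i * c i := by
          rw [mul_sum]
          refine sum_congr rfl fun i hi => ?_
          rw [← zpow_natCast, Int.toNat_of_nonneg (hm i hi), zpow_add₀ hx]
          ring
      _ = 0 := by rw [h x hx, mul_zero]
  have hcoeff := congrArg (Polynomial.coeff · (n + m).toNat) hP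
  simp only [P, Polynomial.finsetSum_coeff, Polynomial.coeff_C_mul_X_pow,
    Polynomial.coeff_zero] at hcoeff
  rw [sum_filter, ← hcoeff]
  refine sum_congr rfl fun i hi => ?_
  have := hm i hi
  congr 1
  apply propext
  omega

theorem Submodule.sum_filter_mem_of_forall_sum_zpow_smul_mem {V : Type*} [AddCommGroup V]
    [Module K V] (S : Submodule K V) (s : Finset ι) (w : ι → ℤ) (g : ι → V)
    (h : ∀ x : K, x ≠ 0 → ∑ i ∈ s, x ^ w i • g i ∈ S) (n : ℤ) :
    ∑ i ∈ s with w i = n, g i ∈ S := by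
  rw [← Submodule.Quotient.mk_eq_zero, ← Module.forall_dual_apply_eq_zero_iff K]
  intro φ
  set ψ := φ ∘ₗ S.mkQ
  have hψ : ∀ v ∈ S, ψ v = 0 := fun v hv => by
    simp [ψ, (Submodule.Quotient.mk_eq_zero S).2 hv]
  have := sum_filter_eq_zero_of_forall_sum_zpow_mul_eq_zero s w (ψ ∘ g)
    (fun x hx => by simpa [map_sum, map_smul] using hψ _ (h x hx)) n
  exact (map_sum ψ g _).trans this

end Separation

theorem aeval_C_mul_X_monomial {σ R : Type*} [CommSemiring R] (t : σ → R) (d : σ →₀ ℕ)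
    (r : R) :
    aeval (fun i => C (t i) * X i) (monomial d r) =
      monomial d ((d.prod fun i k => t i ^ k) * r) := by
  rw [aeval_monomial, monomial_eq, C_mul, algebraMap_eq, map_finsuppProd]
  simp_rw [mul_pow, Finsupp.prod_mul, map_pow]
  ring

theorem Finsupp.prod_zpow_pow_eq_zpow_weight {σ G : Type*} [CommGroupWithZero G] {x : G}
    (hx : x ≠ 0) (e : σ → ℤ) (d : σ →₀ ℕ) :
    (d.prod fun i k => (x ^ e i) ^ k) = x ^ Finsupp.weight e d := by
  rw [Finsupp.weight_apply, Finsupp.prod, Finsupp.sum]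
  induction d.support using Finset.cons_induction with
  | empty => simp
  | cons i s hi ih =>
    rw [Finset.prod_cons, Finset.sum_cons, zpow_add₀ hx, ih, ← zpow_natCast, ← zpow_mul, nsmul_eq_mul,
      mul_comm (e i)]

theorem weightedHomogeneousComponent_mem_of_invariant {σ K : Type*} [Field K] [Infinite K]
    {I : Ideal (MvPolynomial σ K)} (e : σ → ℤ)
    (hinv : ∀ x : K, x ≠ 0 → ∀ f ∈ I, aeval (fun i => C (x ^ e i) * X i) f ∈ I)
    {f : MvPolynomial σ K} (hf : f ∈ I) (n : ℤ) : weightedHomogeneousComponent e n f ∈ I := by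
  classical
  rw [weightedHomogeneousComponent_apply]
  refine (I.restrictScalars K).sum_filter_mem_of_forall_sum_zpow_smul_mem f.support
    (Finsupp.weight e) (fun d => monomial d (coeff d f)) (fun x hx => ?_) n
  have := hinv x hx f hf
  rw [as_sum f, map_sum] at this
  simpa only [aeval_C_mul_X_monomial, Finsupp.prod_zpow_pow_eq_zpow_weight hx, smul_monomial,
    smul_eq_mul, Submodule.restrictScalars_mem] using this

theorem mul_pow_mem_of_mul_aeval_mem {K A : Type*} [Field K] [CommRing A] [Algebra K A]
    {I : Ideal A} {a p : A} (hp : p ∈ I.radical) {q : Polynomial K}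
    (hq : a * Polynomial.aeval p q ∈ I) {k : ℕ} (hk : k ∈ q.support) : a * p ^ k ∈ I := by
  obtain ⟨N, hN⟩ := hp
  have hq0 : q ≠ 0 := by rintro rfl; simp at hk
  obtain ⟨u, hqu, hXu⟩ := q.exists_eq_pow_rootMultiplicity_mul_and_not_dvd hq0 0
  simp only [map_zero, sub_zero] at hqu hXu
  set v := q.rootMultiplicity 0
  obtain ⟨r, s, hrs⟩ := Polynomial.irreducible_X.coprime_pow_of_not_dvd N hXu
  have hv : a * p ^ v ∈ I := by
    have hXv : (Polynomial.X ^ v : Polynomial K) =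
        r * q + s * Polynomial.X ^ v * Polynomial.X ^ N := by
      rw [hqu]; linear_combination (-Polynomial.X ^ v : Polynomial K) * hrs
    have := congrArg (Polynomial.aeval p) hXv
    simp only [map_add, map_mul, map_pow, Polynomial.aeval_X] at this
    rw [this, mul_add]
    refine add_mem ?_ ?_
    · rw [mul_left_comm]; exact I.mul_mem_left _ hq
    · rw [← mul_assoc]; exact I.mul_mem_left _ hN
  have hvk : v ≤ k := by
    by_contra hkv
    rw [Polynomial.mem_support_iff, hqu, Polynomial.coeff_X_pow_mul', if_neg hkv] at hk
    exact hk rfl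
  rw [← Nat.sub_add_cancel hvk, pow_add, mul_left_comm]
  exact I.mul_mem_left _ hv

theorem monomial_mem_of_support_subset_line {σ K : Type*} [Field K]
    {I : Ideal (MvPolynomial σ K)} {b δ : σ →₀ ℕ} (hδ : monomial δ 1 ∈ I.radical)
    {g : MvPolynomial σ K} (hg : g ∈ I) (hline : ∀ d ∈ g.support, ∃ k : ℕ, d = b + k • δ)
    {d : σ →₀ ℕ} (hd : d ∈ g.support) : monomial d (1 : K) ∈ I := by
  classical
  choose! k hk using hline
  set q : Polynomial K := ∑ d' ∈ g.support, Polynomial.C (coeff d' g) * Polynomial.X ^ k d'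
  have hgq : monomial b 1 * Polynomial.aeval (monomial δ 1) q = g := by
    conv_rhs => rw [as_sum g]
    simp only [q, map_sum, mul_sum, map_mul, Polynomial.aeval_C, Polynomial.aeval_X, map_pow,
      monomial_pow, one_pow, algebraMap_eq]
    refine sum_congr rfl fun d' hd' => ?_
    rw [C_mul_monomial, mul_one, monomial_mul, one_mul, ← hk d' hd']
  have hkd : k d ∈ q.support := by
    rw [Polynomial.mem_support_iff, Polynomial.finsetSum_coeff]
    simp only [Polynomial.coeff_C_mul_X_pow]
    rw [sum_eq_single d (fun d' hd' hne => if_neg fun h => hne (by rw [hk d' hd', hk d hd, h]))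
      (fun h => absurd hd h), if_pos rfl]
    exact mem_support_iff.1 hd
  have := mul_pow_mem_of_mul_aeval_mem hδ (by rwa [hgq]) hkd
  rwa [monomial_pow, one_pow, monomial_mul, one_mul, ← hk d hd] at this

local notation "𝟏" => (Finsupp.equivFunOnFinite.symm 1 : Fin 3 →₀ ℕ)

theorem exists_eq_add_smul_of_weight_eq {d d' : Fin 3 →₀ ℕ}
    (h₁ : Finsupp.weight ![1, 0, -1] d' = Finsupp.weight (![1, 0, -1] : Fin 3 → ℤ) d)
    (h₂ : Finsupp.weight ![0, 1, -1] d' = Finsupp.weight (![0, 1, -1] : Fin 3 → ℤ) d) :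
    ∃ k : ℕ, d' = d - (d 0 ⊓ d 1 ⊓ d 2) • 𝟏 + k • 𝟏 := by
  simp only [Finsupp.weight_apply, Int.nsmul_eq_mul, CharP.cast_eq_zero, zero_mul, implies_true,
    Finsupp.sum_fintype, Fin.sum_univ_three, Fin.isValue, Matrix.cons_val_zero, Matrix.cons_val_one,
    Matrix.cons_val, mul_one, mul_zero, add_zero, mul_neg, zero_add] at h₁ h₂
  refine ⟨d' 2 + (d 0 ⊓ d 1 ⊓ d 2) - d 2, ?_⟩
  ext i
  fin_cases i <;>
    simp only [Finsupp.coe_add, Finsupp.coe_tsub, Finsupp.coe_smul, Pi.add_apply, Pi.sub_apply,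
      Pi.smul_apply, Finsupp.coe_equivFunOnFinite_symm, Pi.one_apply, smul_eq_mul, mul_one,
      Fin.zero_eta, Fin.mk_one, Fin.reduceFinMk] at h₁ h₂ ⊢ <;>
    omega

/-- Let `I ⊆ ℂ[X,Y,Z]` be an ideal whose radical is the maximal ideal `(X,Y,Z)`,
and suppose `I` is invariant under the torus
`T₀ = {(t₁,t₂,t₃) ∈ (ℂ*)³ : t₁t₂t₃ = 1}` acting by scaling the variables. Then `I` is a
monomial ideal: every monomial appearing (with nonzero coefficient) in an element of `I`
lies in `I`. -/
theorem stmt_8 (I : Ideal (MvPolynomial (Fin 3) ℂ))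
    (hI : I.radical = Ideal.span {X 0, X 1, X 2})
    (hinv : ∀ t : Fin 3 → ℂ, (∀ i, t i ≠ 0) → t 0 * t 1 * t 2 = 1 →
      ∀ f ∈ I, aeval (fun i : Fin 3 => C (t i) * X i) f ∈ I) :
    ∀ f ∈ I, ∀ d ∈ f.support, (monomial d (1 : ℂ)) ∈ I := by
  intro f hf d hd
  have hT₀ (e : Fin 3 → ℤ) (he : e 0 + e 1 + e 2 = 0) (x : ℂ) (hx : x ≠ 0) :
      ∀ f ∈ I, aeval (fun i => C (x ^ e i) * X i) f ∈ I :=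
    hinv _ (fun i => zpow_ne_zero _ hx) (by rw [← zpow_add₀ hx, ← zpow_add₀ hx, he, zpow_zero])
  set e₁ : Fin 3 → ℤ := ![1, 0, -1]
  set e₂ : Fin 3 → ℤ := ![0, 1, -1]
  set g := weightedHomogeneousComponent e₂ (Finsupp.weight e₂ d)
    (weightedHomogeneousComponent e₁ (Finsupp.weight e₁ d) f)
  have hg : g ∈ I := weightedHomogeneousComponent_mem_of_invariant e₂ (hT₀ e₂ (by simp [e₂]))
    (weightedHomogeneousComponent_mem_of_invariant e₁ (hT₀ e₁ (by simp [e₁])) hf _) _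
  have hX₀ : (X 0 : MvPolynomial (Fin 3) ℂ) ∈ I.radical := hI ▸ Ideal.subset_span (by simp)
  have hXYZ : monomial 𝟏 (1 : ℂ) ∈ I.radical :=
    I.radical.mem_of_dvd (X_dvd_monomial.2 (Or.inr (by simp))) hX₀
  have hweights : ∀ d' ∈ g.support,
      Finsupp.weight e₁ d' = Finsupp.weight e₁ d ∧ Finsupp.weight e₂ d' = Finsupp.weight e₂ d := by
    intro d'
    simp only [g, mem_support_iff, coeff_weightedHomogeneousComponent, ne_eq, ite_eq_right_iff,
      Classical.not_imp, and_imp]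
    tauto
  refine monomial_mem_of_support_subset_line hXYZ hg
    (fun d' hd' => exists_eq_add_smul_of_weight_eq (hweights d' hd').1 (hweights d' hd').2) ?_
  simpa [g, coeff_weightedHomogeneousComponent] using hd
end

section
/- Let A = ℂ[X,Y,Z] and let I ⊆ A be a monomial ideal. Let w = (w₁,w₂,w₃) ∈ ℕ³ be a triple of nonnegative integers. Let φ : I → A/I be an A-module homomorphism that is homogeneous of multidegree w, i.e. for every monomial X^aY^bZ^c ∈ I, the element φ(X^aY^bZ^c) lies in the ℂ-linear span of the residue class of X^{a+w₁}Y^{b+w₂}Z^{c+w₃} in A/I. Then φ = 0. -/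
/-!
The image of a monomial `m ∈ I` is a multiple of the class of `X^w * m`, which lies in `I`
because `w` has nonnegative entries; so `φ` kills every monomial of `I`, and a monomial ideal
is spanned, as a module, by the monomials it contains.
-/

open MvPolynomial

namespace MvPolynomial

variable {σ R M : Type*} [CommSemiring R] [AddCommMonoid M] [Module (MvPolynomial σ R) M]

theorem linearMap_eq_zero_of_monomial_mem {I : Ideal (MvPolynomial σ R)}
    (hI : ∀ f ∈ I, ∀ d ∈ f.support, monomial d (1 : R) ∈ I)
    (φ : I →ₗ[MvPolynomial σ R] M)
    (hφ : ∀ d (hd : monomial d (1 : R) ∈ I), φ ⟨monomial d 1, hd⟩ = 0) : φ = 0 := by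
  ext ⟨f, hf⟩
  have hsum : (⟨f, hf⟩ : I) =
      ∑ d ∈ f.support.attach,
        (C (f.coeff d) : MvPolynomial σ R) • (⟨monomial d 1, hI f hf d d.2⟩ : I) := by
    apply Subtype.ext
    simp only [Submodule.coe_sum, SetLike.val_smul, smul_eq_mul, C_mul_monomial, mul_one]
    rw [Finset.sum_attach f.support fun d => monomial d (f.coeff d)]
    exact f.support_sum_monomial_coeff.symm
  rw [LinearMap.zero_apply, hsum, map_sum]
  exact Finset.sum_eq_zero fun d _ => by rw [map_smul, hφ, smul_zero]

theorem monomial_one_fin_three (d : Fin 3 →₀ ℕ) :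
    monomial d (1 : R) = X 0 ^ d 0 * X 1 ^ d 1 * X 2 ^ d 2 := by
  rw [monomial_eq, Finsupp.prod_fintype _ _ fun _ => pow_zero _]
  simp [Fin.prod_univ_three]

end MvPolynomial

/-- Let `A = ℂ[X,Y,Z]`, `I ⊆ A` a monomial ideal, `w ∈ ℕ³`, and
`φ : I → A/I` an `A`-module homomorphism homogeneous of multidegree `w` (each monomial
`X^aY^bZ^c ∈ I` is sent into the line spanned by the class of `X^{a+w₁}Y^{b+w₂}Z^{c+w₃}`).
Then `φ = 0`. -/
theorem stmt_9 (I : Ideal (MvPolynomial (Fin 3) ℂ))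
    (hmono : ∀ f ∈ I, ∀ d ∈ f.support, (monomial d (1 : ℂ)) ∈ I)
    (w₁ w₂ w₃ : ℕ)
    (φ : I →ₗ[MvPolynomial (Fin 3) ℂ] (MvPolynomial (Fin 3) ℂ ⧸ I))
    (hhom : ∀ a b c : ℕ, ∀ hm : X 0 ^ a * X 1 ^ b * X 2 ^ c ∈ I,
      ∃ e : ℂ, φ ⟨X 0 ^ a * X 1 ^ b * X 2 ^ c, hm⟩
        = Submodule.Quotient.mk
            (C e * X 0 ^ (a + w₁) * X 1 ^ (b + w₂) * X 2 ^ (c + w₃))) :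
    φ = 0 := by
  refine linearMap_eq_zero_of_monomial_mem hmono φ fun d hd => ?_
  simp only [monomial_one_fin_three] at hd ⊢
  obtain ⟨e, he⟩ := hhom (d 0) (d 1) (d 2) hd
  rw [he, Submodule.Quotient.mk_eq_zero]
  convert I.mul_mem_left (C e * X 0 ^ w₁ * X 1 ^ w₂ * X 2 ^ w₃) hd using 1
  ring
end

section
/- Let A = ℂ[X,Y,Z] and let I ⊆ A be a monomial ideal such that A/I is a finite-dimensional ℂ-vector space. Let w = (w₁,w₂,w₃) ∈ ℤ³ with w₁ < 0, w₂ < 0, and w₃ < 0. Let φ : I → A/I be an A-module homomorphism that is homogeneous of multidegree w, i.e. for every monomial X^aY^bZ^c ∈ I: if a+w₁ ≥ 0, b+w₂ ≥ 0 and c+w₃ ≥ 0 then φ(X^aY^bZ^c) lies in the ℂ-linear span of the residue class of X^{a+w₁}Y^{b+w₂}Z^{c+w₃} in A/I, and otherwise φ(X^aY^bZ^c) = 0. Then φ = 0. -/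
/-!
Write `s = -w ∈ ℕ³`, so that `φ(x^d)` is a multiple `e • x^(d-s)`. If it is nonzero, pick `k`
with `x^(d-s) X^k ∉ I` but `x^(d-s) X^(k+1) ∈ I`; such `k` exists because `A/I` is
finite-dimensional, so some power of `X` lies in the monomial ideal `I`. For
`d' = d - s + (k + s_X) e_X` we get `x^d' ∈ I` and
`Y^(s_Y) Z^(s_Z) φ(x^d') = X^k φ(x^d) = e • x^(d-s) X^k ≠ 0`, so `φ(x^d') ≠ 0` although the
`Y`-exponent of `d'` is smaller than that of `d`. By infinite descent `φ` kills every monomial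
of `I`, and these span `I`.
-/

open MvPolynomial

theorem Finsupp.erase_add_tsub_add_single {σ : Type*} {s d : σ →₀ ℕ} (h : s ≤ d) {i : σ} {k : ℕ} :
    s.erase i + (d - s + single i (k + s i)) = single i k + d := by
  ext l
  have := h l
  rcases eq_or_ne l i with rfl | hl
  · simp only [add_apply, tsub_apply, erase_same, single_eq_same, zero_add]
    omega
  · simp only [add_apply, tsub_apply, erase_ne hl, single_eq_of_ne hl, add_zero, zero_add]
    omega

namespace MvPolynomial

section CommSemiring

variable {σ R : Type*} [CommSemiring R] {I : Ideal (MvPolynomial σ R)}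

theorem monomial_one_mem_of_le {d₁ d₂ : σ →₀ ℕ} (h : d₁ ≤ d₂) (h₁ : monomial d₁ (1 : R) ∈ I) :
    monomial d₂ (1 : R) ∈ I := by
  rw [← tsub_add_cancel_of_le h, ← mul_one (1 : R), ← monomial_mul]
  exact I.mul_mem_left _ h₁

theorem map_monomial_add {M : Type*} [AddCommMonoid M] [Module (MvPolynomial σ R) M]
    (φ : I →ₗ[MvPolynomial σ R] M) {d₁ d₂ : σ →₀ ℕ} (h₁ : monomial d₁ (1 : R) ∈ I)
    (h : monomial (d₂ + d₁) (1 : R) ∈ I) :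
    φ ⟨monomial (d₂ + d₁) 1, h⟩ = monomial d₂ (1 : R) • φ ⟨monomial d₁ 1, h₁⟩ := by
  rw [← map_smul]
  congr 1
  ext1
  simp [monomial_mul]

theorem linearMap_eq_zero_of_map_monomial {M : Type*} [AddCommMonoid M]
    [Module (MvPolynomial σ R) M]
    (hmono : ∀ f ∈ I, ∀ d ∈ f.support, monomial d (1 : R) ∈ I) (φ : I →ₗ[MvPolynomial σ R] M)
    (h : ∀ d (hd : monomial d (1 : R) ∈ I), φ ⟨_, hd⟩ = 0) : φ = 0 := by
  ext ⟨f, hf⟩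
  have hsum : (⟨f, hf⟩ : I) = ∑ d ∈ f.support.attach,
      (C (f.coeff d) : MvPolynomial σ R) • (⟨monomial d 1, hmono f hf d d.2⟩ : I) := by
    ext1
    simp only [Submodule.coe_sum, Submodule.coe_smul, smul_eq_mul, C_mul_monomial, mul_one]
    conv_lhs => rw [f.as_sum, ← Finset.sum_attach]
  simp only [hsum, map_sum, map_smul, h, smul_zero, Finset.sum_const_zero, LinearMap.zero_apply]

theorem monomial_fin_three (d : Fin 3 →₀ ℕ) (a : R) :
    monomial d a = C a * X 0 ^ d 0 * X 1 ^ d 1 * X 2 ^ d 2 := by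
  rw [monomial_eq, Finsupp.prod_fintype _ _ fun _ => pow_zero _, Fin.prod_univ_three]
  ring

theorem monomial_mem_iff_monomial_one_mem {d : σ →₀ ℕ} {e : R} (he : IsUnit e) :
    monomial d e ∈ I ↔ monomial d (1 : R) ∈ I := by
  rw [← mul_one e, ← C_mul_monomial, Ideal.unit_mul_mem_iff_mem _ (he.map C)]

theorem exists_monomial_add_single_notMem_add_single_succ_mem {u : σ →₀ ℕ} {i : σ} {n : ℕ}
    (hu : monomial u (1 : R) ∉ I) (hn : (X i ^ n : MvPolynomial σ R) ∈ I) :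
    ∃ k, monomial (u + Finsupp.single i k) (1 : R) ∉ I ∧
      monomial (u + Finsupp.single i (k + 1)) (1 : R) ∈ I := by
  classical
  have hex : ∃ k, monomial (u + Finsupp.single i k) (1 : R) ∈ I :=
    ⟨n, monomial_one_mem_of_le le_add_self (by rwa [X_pow_eq_monomial] at hn)⟩
  have hk0 : Nat.find hex ≠ 0 := fun hk => hu (by simpa using (Nat.find_eq_zero hex).mp hk)
  refine ⟨Nat.find hex - 1, Nat.find_min hex (by omega), ?_⟩
  rw [Nat.sub_add_cancel (Nat.one_le_iff_ne_zero.mpr hk0)]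
  exact Nat.find_spec hex

end CommSemiring

section CommRing

variable {σ R : Type*} [CommRing R] {I : Ideal (MvPolynomial σ R)}

/-- `φ` is homogeneous of multidegree `-s`. -/
def LowersDegreeBy (φ : I →ₗ[MvPolynomial σ R] MvPolynomial σ R ⧸ I) (s : σ →₀ ℕ) : Prop :=
  ∀ d (hd : monomial d (1 : R) ∈ I), ∃ e : R,
    φ ⟨_, hd⟩ = if s ≤ d then Submodule.Quotient.mk (monomial (d - s) e) else 0

theorem LowersDegreeBy.of_fin_three {I : Ideal (MvPolynomial (Fin 3) R)}
    {φ : I →ₗ[MvPolynomial (Fin 3) R] MvPolynomial (Fin 3) R ⧸ I} {p q r : ℕ}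
    (hφ : ∀ a b c : ℕ, ∀ hm : X 0 ^ a * X 1 ^ b * X 2 ^ c ∈ I, ∃ e : R,
      φ ⟨_, hm⟩ = if p ≤ a ∧ q ≤ b ∧ r ≤ c then
        Submodule.Quotient.mk (C e * X 0 ^ (a - p) * X 1 ^ (b - q) * X 2 ^ (c - r)) else 0) :
    LowersDegreeBy φ (Finsupp.equivFunOnFinite.symm ![p, q, r]) := by
  intro d hd
  have hm : X 0 ^ d 0 * X 1 ^ d 1 * X 2 ^ d 2 ∈ I := by simpa [monomial_fin_three] using hd
  have hle : Finsupp.equivFunOnFinite.symm ![p, q, r] ≤ d ↔ p ≤ d 0 ∧ q ≤ d 1 ∧ r ≤ d 2 := by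
    rw [Finsupp.le_def, Fin.forall_fin_succ, Fin.forall_fin_succ, Fin.forall_fin_one]
    rfl
  simp_rw [hle, monomial_fin_three, C_1, one_mul]
  exact hφ (d 0) (d 1) (d 2) hm

end CommRing

section Field

variable {σ K : Type*} [Field K] {I : Ideal (MvPolynomial σ K)}

theorem finite_setOf_monomial_notMem (hmono : ∀ f ∈ I, ∀ d ∈ f.support, monomial d (1 : K) ∈ I)
    [FiniteDimensional K (MvPolynomial σ K ⧸ I)] :
    {d | monomial d (1 : K) ∉ I}.Finite := by
  set s := {d | monomial d (1 : K) ∉ I}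
  have hinj : Function.Injective ((I.mkQ.restrictScalars K).domRestrict (restrictSupport K s)) := by
    rw [← LinearMap.ker_eq_bot, Submodule.eq_bot_iff]
    rintro ⟨f, hfs⟩ hf
    have hfI : f ∈ I := (Submodule.Quotient.mk_eq_zero I).mp hf
    have : f.support = ∅ := Finset.eq_empty_of_forall_notMem fun d hd => hfs hd (hmono f hfI d hd)
    simpa [support_eq_empty] using this
  have := Module.Finite.of_injective _ hinj
  exact IsNoetherian.finite_basis_index (basisRestrictSupport K s)

theorem exists_X_pow_mem (hmono : ∀ f ∈ I, ∀ d ∈ f.support, monomial d (1 : K) ∈ I)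
    [FiniteDimensional K (MvPolynomial σ K ⧸ I)] (i : σ) :
    ∃ n, (X i ^ n : MvPolynomial σ K) ∈ I := by
  by_contra! h
  refine Set.infinite_of_injective_forall_mem (Finsupp.single_injective i) (fun n => ?_)
    (finite_setOf_monomial_notMem hmono)
  simpa [X_pow_eq_monomial] using h n

namespace LowersDegreeBy

variable {φ : I →ₗ[MvPolynomial σ K] MvPolynomial σ K ⧸ I} {s : σ →₀ ℕ} {i j : σ}

theorem exists_lt_of_map_monomial_ne_zero (hφ : LowersDegreeBy φ s) (hij : i ≠ j)
    (hi : s i ≠ 0) (hj : s j ≠ 0) (hX : ∃ n, (X i ^ n : MvPolynomial σ K) ∈ I)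
    {d : σ →₀ ℕ} (hd : monomial d (1 : K) ∈ I) (hne : φ ⟨_, hd⟩ ≠ 0) :
    ∃ d' : σ →₀ ℕ, ∃ hd' : monomial d' (1 : K) ∈ I, φ ⟨_, hd'⟩ ≠ 0 ∧ d' j < d j := by
  obtain ⟨e, he⟩ := hφ d hd
  have hsd : s ≤ d := by
    by_contra h
    rw [if_neg h] at he
    exact hne he
  rw [if_pos hsd] at he
  have hu : monomial (d - s) e ∉ I := fun h => hne (by rwa [he, Submodule.Quotient.mk_eq_zero])
  have he0 : e ≠ 0 := by
    rintro rfl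
    simp at hu
  obtain ⟨n, hn⟩ := hX
  obtain ⟨k, hk, hk_succ⟩ := exists_monomial_add_single_notMem_add_single_succ_mem
    (fun h => hu ((monomial_mem_iff_monomial_one_mem he0.isUnit).mpr h)) hn
  set d' := d - s + Finsupp.single i (k + s i)
  have hd' : monomial d' (1 : K) ∈ I := by
    refine monomial_one_mem_of_le ?_ hk_succ
    simp only [d']
    gcongr
    omega
  have hsplit : s.erase i + d' = Finsupp.single i k + d := Finsupp.erase_add_tsub_add_single hsd
  have hbig : monomial (Finsupp.single i k + d) (1 : K) ∈ I :=
    monomial_one_mem_of_le le_add_self hd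
  have hcalc : monomial (s.erase i) (1 : K) • φ ⟨_, hd'⟩ =
      Submodule.Quotient.mk (monomial (d - s + Finsupp.single i k) e) := by
    rw [← map_monomial_add φ hd' (hsplit ▸ hbig)]
    simp_rw [hsplit]
    rw [map_monomial_add φ hd hbig, he, ← Submodule.Quotient.mk_smul, smul_eq_mul, monomial_mul,
      one_mul, add_comm]
  refine ⟨d', hd', fun h0 => hk ?_, ?_⟩
  · rwa [h0, smul_zero, eq_comm, Submodule.Quotient.mk_eq_zero,
      monomial_mem_iff_monomial_one_mem he0.isUnit] at hcalc
  · have := hsd j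
    simp only [d', Finsupp.add_apply, Finsupp.tsub_apply, Finsupp.single_eq_of_ne' hij, add_zero]
    omega

theorem map_monomial_eq_zero (hφ : LowersDegreeBy φ s) (hij : i ≠ j)
    (hi : s i ≠ 0) (hj : s j ≠ 0) (hX : ∃ n, (X i ^ n : MvPolynomial σ K) ∈ I)
    (d : σ →₀ ℕ) (hd : monomial d (1 : K) ∈ I) : φ ⟨_, hd⟩ = 0 := by
  induction h : d j using Nat.strong_induction_on generalizing d with
  | _ n ih =>
    by_contra hne
    obtain ⟨d', hd', hne', hlt⟩ := hφ.exists_lt_of_map_monomial_ne_zero hij hi hj hX hd hne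
    exact hne' (ih _ (h ▸ hlt) d' hd' rfl)

theorem eq_zero (hφ : LowersDegreeBy φ s)
    (hmono : ∀ f ∈ I, ∀ d ∈ f.support, monomial d (1 : K) ∈ I)
    [FiniteDimensional K (MvPolynomial σ K ⧸ I)] (hij : i ≠ j) (hi : s i ≠ 0) (hj : s j ≠ 0) :
    φ = 0 :=
  linearMap_eq_zero_of_map_monomial hmono φ
    (hφ.map_monomial_eq_zero hij hi hj (exists_X_pow_mem hmono i))

end LowersDegreeBy

end Field

end MvPolynomial

/-- Let `A = ℂ[X,Y,Z]`, `I ⊆ A` a monomial ideal with `A/I` finite-dimensional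
over `ℂ`, and `w ∈ ℤ³` with all three components negative. If `φ : I → A/I` is an `A`-module
homomorphism homogeneous of multidegree `w` (a monomial `X^aY^bZ^c ∈ I` is sent into the line
spanned by the class of `X^{a+w₁}Y^{b+w₂}Z^{c+w₃}` when all shifted exponents are nonnegative,
and to `0` otherwise), then `φ = 0`. -/
theorem stmt_10 (I : Ideal (MvPolynomial (Fin 3) ℂ))
    (hmono : ∀ f ∈ I, ∀ d ∈ f.support, (monomial d (1 : ℂ)) ∈ I)
    [FiniteDimensional ℂ (MvPolynomial (Fin 3) ℂ ⧸ I)]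
    (w₁ w₂ w₃ : ℤ) (hw₁ : w₁ < 0) (hw₂ : w₂ < 0) (hw₃ : w₃ < 0)
    (φ : I →ₗ[MvPolynomial (Fin 3) ℂ] (MvPolynomial (Fin 3) ℂ ⧸ I))
    (hhom : ∀ a b c : ℕ, ∀ hm : X 0 ^ a * X 1 ^ b * X 2 ^ c ∈ I,
      if 0 ≤ (a : ℤ) + w₁ ∧ 0 ≤ (b : ℤ) + w₂ ∧ 0 ≤ (c : ℤ) + w₃ then
        ∃ e : ℂ, φ ⟨X 0 ^ a * X 1 ^ b * X 2 ^ c, hm⟩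
          = Submodule.Quotient.mk
              (C e * X 0 ^ ((a : ℤ) + w₁).toNat * X 1 ^ ((b : ℤ) + w₂).toNat
                * X 2 ^ ((c : ℤ) + w₃).toNat)
      else φ ⟨X 0 ^ a * X 1 ^ b * X 2 ^ c, hm⟩ = 0) :
    φ = 0 := by
  refine (LowersDegreeBy.of_fin_three (p := (-w₁).toNat) (q := (-w₂).toNat) (r := (-w₃).toNat)
    fun a b c hm => ?_).eq_zero hmono (i := 0) (j := 1) (by decide)
    (by change (-w₁).toNat ≠ 0; omega) (by change (-w₂).toNat ≠ 0; omega)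
  have hh := hhom a b c hm
  by_cases h : 0 ≤ (a : ℤ) + w₁ ∧ 0 ≤ (b : ℤ) + w₂ ∧ 0 ≤ (c : ℤ) + w₃
  · rw [if_pos h] at hh
    obtain ⟨e, he⟩ := hh
    refine ⟨e, he.trans ?_⟩
    rw [if_pos (by omega)]
    congr 5 <;> omega
  · rw [if_neg h] at hh
    refine ⟨0, hh.trans ?_⟩
    rw [if_neg (by omega)]
end
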